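/- Expansion correctness: given x_1,...,x_N and nonnegative degrees d_1,...,d_N with l_i = d_1+...+d_i and l_N ≤ M, define y : Fin M → Option α by y_j = first non-⊥ element of the sequence z_j, z_{j+1}, ..., z_M, where z_{l_i} = some x_i whenever d_i > 0 and z_k = ⊥ otherwise. Then for every i with d_i > 0 and every j with l_{i−1} < j ≤ l_i, y_j = some x_i; and y_j = ⊥ for l_N < j ≤ M. -/

import Mathlib

namespace List

variable {α : Type*}

theorem filterMap_id_map_range'_eq_nil {z : ℕ → Option α} {j n : ℕ}
    (h : ∀ m, j ≤ m → m < j + n → z m = none) :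
    ((range' j n).map z).filterMap id = [] := by
  rw [filterMap_eq_nil_iff]
  intro o ho
  obtain ⟨m, hm, rfl⟩ := mem_map.mp ho
  obtain ⟨hjm, hmn⟩ := mem_range'_1.mp hm
  exact h m hjm hmn

theorem head?_filterMap_id_map_range'_eq_some {z : ℕ → Option α} {a : α} {k : ℕ} :
    ∀ {j n : ℕ}, j ≤ k → k < j + n → (∀ m, j ≤ m → m < k → z m = none) → z k = some a →
      (((range' j n).map z).filterMap id).head? = some a
  | _, 0, hjk, hkn, _, _ => by omega
  | j, n + 1, hjk, hkn, hnone, hk => by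
    rw [range'_succ, map_cons, filterMap_cons]
    rcases hjk.eq_or_lt with rfl | hlt
    · simp [hk]
    · rw [hnone j le_rfl hlt]
      exact head?_filterMap_id_map_range'_eq_some hlt (by omega)
        (fun m hm hmk => hnone m (by omega) hmk) hk

end List

/-- Expansion correctness: with `l i = d 1 + ... + d i ≤ M`, `z (l i) = some (x i)` for
`d i > 0` and `z k = ⊥` at all other positions in `[1, M]`, back-filling each position
with the first non-`⊥` element at or after it yields `y j = some (x i)` for all
`l (i−1) < j ≤ l i` (when `d i > 0`), and `y j = ⊥` for `l N < j ≤ M`. -/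
theorem expansion_correct {α : Type*} (N M : ℕ) (x : ℕ → α) (d : ℕ → ℕ)
    (l : ℕ → ℕ) (hl : ∀ n, l n = ∑ k ∈ Finset.range n, d (k + 1))
    (hlN : l N ≤ M)
    (z : ℕ → Option α)
    (hz1 : ∀ i, 1 ≤ i → i ≤ N → 0 < d i → z (l i) = some (x i))
    (hz2 : ∀ k, 1 ≤ k → k ≤ M →
      (¬ ∃ i, 1 ≤ i ∧ i ≤ N ∧ 0 < d i ∧ l i = k) → z k = none)
    (y : ℕ → Option α)
    (hy : ∀ j, y j = (((List.range' j (M + 1 - j)).map z).filterMap id).head?) :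
    (∀ i, 1 ≤ i → i ≤ N → 0 < d i →
      ∀ j, l (i - 1) < j → j ≤ l i → y j = some (x i)) ∧
    (∀ j, l N < j → j ≤ M → y j = none) := by
  have hmono : Monotone l := fun a b hab => by
    simpa only [hl] using Finset.sum_le_sum_of_subset (Finset.range_subset_range.mpr hab)
  refine ⟨fun i hi1 hiN hdi j hj1 hj2 => ?_, fun j hj1 hj2 => ?_⟩
  · obtain ⟨i, rfl⟩ : ∃ i₀, i = i₀ + 1 := ⟨i - 1, by omega⟩
    have hliM : l (i + 1) ≤ M := (hmono hiN).trans hlN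
    rw [hy]
    refine List.head?_filterMap_id_map_range'_eq_some hj2 (by omega) (fun m hjm hml => ?_)
      (hz1 _ hi1 hiN hdi)
    -- markers are sorted, so none lies strictly between `l i` and `l (i + 1)`
    refine hz2 m (by omega) (by omega) fun ⟨i', _, _, _, hi'⟩ => ?_
    exact hmono.ne_of_lt_of_lt_nat i (by simpa using hj1.trans_le hjm) hml i' hi'
  · rw [hy, List.filterMap_id_map_range'_eq_nil, List.head?_nil]
    exact fun m hjm _ => hz2 m (by omega) (by omega) fun ⟨i', _, hi'N, _, hi'⟩ => by
      have := hmono hi'N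
      omega
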